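/- arXiv:2409.20172 — 3 statements merged into one kernel-verified Lean document; each statement's English description precedes it below -/
import Mathlib

section
/- Let G be a finite simple graph on n vertices, let A, B ⊆ V(G), let F be a finite family of cliques of G, and let f > 0. Suppose there exists y : F → [0,1] such that ∑_{e ∈ F : e ∩ V(P) ≠ ∅} y(e) ≥ 1 for every A-B path P in G and ∑_{e ∈ F} y(e) ≤ f. Then there exists an (A,B)-separator S ⊆ V(G) in G with ρ*_{G,F}(S) ≤ (8 + 4·ln n)·f. -/
open Finset
open scoped ENNReal

/-- `X` is an `(A,B)`-separator in the graph `G`. -/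
def gIsSeparator {β : Type*} (G : SimpleGraph β) (A B X : Finset β) : Prop :=
  ∀ a ∈ A, ∀ b ∈ B, ∀ p : G.Walk a b, p.IsPath → ∃ v ∈ p.support, v ∈ X

/-- `ρ*_{G,F}(S)`: minimum fractional cover of `S` by the cliques in `F` (`∞` if none). -/
noncomputable def fracCliqueCover {β : Type*} [DecidableEq β] (F : Finset (Finset β))
    (S : Finset β) : ℝ≥0∞ :=
  sInf {c : ℝ≥0∞ | ∃ γ : Finset β → ℝ, (∀ e, 0 ≤ γ e ∧ γ e ≤ 1) ∧
    (∀ v ∈ S, 1 ≤ ∑ e ∈ F, if v ∈ e then γ e else 0) ∧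
    c = ENNReal.ofReal (∑ e ∈ F, γ e)}

/-!
Scale `y` to `z = N y` with `N = 4n` and let `w v` be the total `z`-weight of the cliques
through `v`, so that every `A`-`B` path has `w`-weight at least `N`. Let `d v` be the least
`w`-weight of a walk from `A` to `v`, capped at `N`. For every integer level `0 ≤ k < N` the
vertices with `d v - w v ≤ k < d v` separate `A` from `B`. If `m e` is the least value of `d`
on a clique `e`, then `d v - w v ≤ m e ≤ d v` for all `v ∈ e`, so the weights
`min 1 (z e / max |m e - k| 1)` cover every vertex of level `k` with `w v ≥ 1`. The levels on
either side of `m e` lie at distances at least `0, 1, 2, …`, so summed over all levels a clique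
pays at most `2 z e H` with `H = ∑_{j < N} 1 / max j 1 ≤ 3 + (3/2) ln n`, while at most `n`
levels contain a vertex with `w v < 1`. Averaging over the at least `3n` remaining levels gives
a level whose cover costs at most `(8/3) H f ≤ (8 + 4 ln n) f`.
-/

theorem sum_le_sum_range_card_of_antitone {h : ℕ → ℝ} (hh : Antitone h) (T : Finset ℕ) :
    ∑ j ∈ T, h j ≤ ∑ j ∈ range #T, h j := by
  induction T using Finset.induction_on_max with
  | empty => simp
  | insert a s hlt ih =>
    have has : a ∉ s := fun ha => (hlt a ha).false
    have hcard : #s ≤ a := by simpa using card_le_card fun x hx => mem_range.2 (hlt x hx)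
    rw [sum_insert has, card_insert_of_notMem has, sum_range_succ, add_comm]
    exact add_le_add ih (hh hcard)

theorem one_le_abs_natCast_sub_natCast {k l : ℕ} (h : k ≠ l) : 1 ≤ |(k : ℝ) - l| := by
  rcases Nat.lt_or_gt_of_ne h with h | h
  · rw [abs_sub_comm, abs_of_pos (by simpa using h)]
    have : (k : ℝ) + 1 ≤ l := by exact_mod_cast h
    linarith
  · rw [abs_of_pos (by simpa using h)]
    have : (l : ℝ) + 1 ≤ k := by exact_mod_cast h
    linarith

theorem one_le_sum_min_one {ι : Type*} (s : Finset ι) {a : ι → ℝ} (ha : ∀ i ∈ s, 0 ≤ a i)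
    (h : 1 ≤ ∑ i ∈ s, a i) : 1 ≤ ∑ i ∈ s, min 1 (a i) := by
  by_cases hbig : ∃ i ∈ s, 1 ≤ a i
  · obtain ⟨i, hi, h1⟩ := hbig
    calc 1 = min 1 (a i) := (min_eq_left h1).symm
      _ ≤ ∑ i ∈ s, min 1 (a i) := single_le_sum (fun j hj => le_min zero_le_one (ha j hj)) hi
  · push Not at hbig
    rwa [sum_congr rfl fun i hi => min_eq_right (hbig i hi).le]

theorem exists_mem_sdiff_sub_mul_le_sum {ι : Type*} [DecidableEq ι] (s t : Finset ι)
    {f : ι → ℝ} (hf : ∀ i ∈ s, 0 ≤ f i) {r : ℕ} (ht : #t ≤ r) (hr : r < #s) :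
    ∃ i ∈ s \ t, ((#s : ℝ) - r) * f i ≤ ∑ i ∈ s, f i := by
  have hcard : #s ≤ #(s \ t) + r := (card_le_card_sdiff_add_card (t := t)).trans (by omega)
  obtain ⟨i, hi, hmin⟩ := (s \ t).exists_min_image f (card_pos.1 (by omega))
  refine ⟨i, hi, ?_⟩
  calc ((#s : ℝ) - r) * f i ≤ #(s \ t) * f i := by
        gcongr
        · exact hf i (mem_sdiff.1 hi).1
        · rw [sub_le_iff_le_add]; exact_mod_cast hcard
    _ ≤ ∑ i ∈ s \ t, f i := by simpa using card_nsmul_le_sum _ _ _ hmin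
    _ ≤ ∑ i ∈ s, f i := sum_le_sum_of_subset_of_nonneg sdiff_subset fun i hi _ => hf i hi

theorem sum_inv_max_one_le_of_one_le_abs_sub {ι : Type*} (K : Finset ι) (g : ι → ℝ)
    (hg : ∀ i ∈ K, 0 ≤ g i) (hsep : ∀ i ∈ K, ∀ j ∈ K, i ≠ j → 1 ≤ |g i - g j|) :
    ∑ i ∈ K, 1 / max (g i) 1 ≤ ∑ j ∈ range #K, 1 / max (j : ℝ) 1 := by
  have hanti : Antitone fun j : ℕ => 1 / max (j : ℝ) 1 := fun i j hij =>
    one_div_le_one_div_of_le (by positivity) (max_le_max (by exact_mod_cast hij) le_rfl)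
  have hinj : Set.InjOn (fun i => ⌊g i⌋₊) K := by
    intro i hi j hj (hij : ⌊g i⌋₊ = ⌊g j⌋₊)
    by_contra hne
    have hi₁ := Nat.floor_le (hg i hi)
    have hj₁ := Nat.floor_le (hg j hj)
    have hi₂ := Nat.lt_floor_add_one (g i)
    have hj₂ := Nat.lt_floor_add_one (g j)
    rw [hij] at hi₁ hi₂
    exact (hsep i hi j hj hne).not_gt (abs_sub_lt_iff.2 ⟨by linarith, by linarith⟩)
  calc ∑ i ∈ K, 1 / max (g i) 1
      ≤ ∑ i ∈ K, 1 / max (⌊g i⌋₊ : ℝ) 1 := by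
        gcongr with i hi
        exact Nat.floor_le (hg i hi)
    _ = ∑ j ∈ K.image (fun i => ⌊g i⌋₊), 1 / max (j : ℝ) 1 :=
        (sum_image (f := fun j : ℕ => 1 / max (j : ℝ) 1) hinj).symm
    _ ≤ ∑ j ∈ range #K, 1 / max (j : ℝ) 1 := by
        rw [← card_image_of_injOn hinj]
        exact sum_le_sum_range_card_of_antitone hanti _

theorem sum_range_inv_max_abs_sub_le (x : ℝ) (N : ℕ) :
    ∑ k ∈ range N, 1 / max |x - k| 1 ≤ 2 * ∑ j ∈ range N, 1 / max (j : ℝ) 1 := by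
  have hside : ∀ K ⊆ range N, (∀ k ∈ K, ∀ l ∈ K, |(|x - k| - |x - l|)| = |(k : ℝ) - l|) →
      ∑ k ∈ K, 1 / max |x - k| 1 ≤ ∑ j ∈ range N, 1 / max (j : ℝ) 1 := by
    intro K hK hdist
    calc ∑ k ∈ K, 1 / max |x - k| 1 ≤ ∑ j ∈ range #K, 1 / max (j : ℝ) 1 :=
          sum_inv_max_one_le_of_one_le_abs_sub K _ (fun _ _ => abs_nonneg _)
            fun k hk l hl hkl => (hdist k hk l hl).symm ▸ one_le_abs_natCast_sub_natCast hkl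
      _ ≤ ∑ j ∈ range N, 1 / max (j : ℝ) 1 :=
        sum_le_sum_of_subset_of_nonneg (range_subset_range.2 (by simpa using card_le_card hK))
          fun _ _ _ => by positivity
  rw [← sum_filter_add_sum_filter_not (range N) (fun k : ℕ => (k : ℝ) ≤ x), two_mul]
  gcongr <;> refine hside _ (filter_subset _ _) fun k hk l hl => ?_ <;>
    simp only [mem_filter, not_le] at hk hl
  · rw [abs_of_nonneg (sub_nonneg.2 hk.2), abs_of_nonneg (sub_nonneg.2 hl.2), abs_sub_comm]
    ring_nf
  · rw [abs_of_neg (sub_neg.2 hk.2), abs_of_neg (sub_neg.2 hl.2)]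
    ring_nf

theorem sum_range_succ_inv_max_one (m : ℕ) :
    ∑ j ∈ range (m + 1), 1 / max (j : ℝ) 1 = 1 + harmonic m := by
  rw [sum_range_succ', harmonic]
  push_cast
  simp [add_comm]

theorem sum_range_four_mul_inv_max_one_le {n : ℕ} (hn : 1 ≤ n) :
    ∑ j ∈ range (4 * n), 1 / max (j : ℝ) 1 ≤ 3 + 3 / 2 * Real.log n := by
  obtain rfl | rfl | hn3 : n = 1 ∨ n = 2 ∨ 3 ≤ n := by omega
  · norm_num [sum_range_succ]
  · have := Real.log_two_gt_d9
    norm_num [sum_range_succ]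
    linarith
  obtain ⟨m, hm⟩ : ∃ m, 4 * n = m + 1 := ⟨4 * n - 1, by omega⟩
  have hlog_n : 1 ≤ Real.log n := by
    rw [Real.le_log_iff_exp_le (by positivity)]
    have : (3 : ℝ) ≤ n := by exact_mod_cast hn3
    linarith [Real.exp_one_lt_d9]
  have hlog_m : Real.log m ≤ 2 * Real.log 2 + Real.log n := by
    have : (m : ℝ) + 1 = 4 * n := by exact_mod_cast hm.symm
    calc Real.log m ≤ Real.log (2 ^ 2 * n) :=
          Real.log_le_log (by norm_cast; omega) (by linarith)
      _ = 2 * Real.log 2 + Real.log n := by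
          rw [Real.log_mul (by norm_num) (by positivity), Real.log_pow]; push_cast; ring
  rw [hm, sum_range_succ_inv_max_one]
  linarith [harmonic_le_one_add_log m, Real.log_two_lt_d9]

section LevelCover

variable {ι : Type*}

noncomputable def levelCover (z m : ι → ℝ) (t : ℝ) (e : ι) : ℝ :=
  min 1 (z e / max |m e - t| 1)

theorem levelCover_nonneg {z : ι → ℝ} (hz : ∀ e, 0 ≤ z e) (m : ι → ℝ) (t : ℝ) (e : ι) :
    0 ≤ levelCover z m t e :=
  le_min zero_le_one (div_nonneg (hz e) (by positivity))

theorem levelCover_le_one (z m : ι → ℝ) (t : ℝ) (e : ι) : levelCover z m t e ≤ 1 :=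
  min_le_left _ _

theorem sum_range_sum_levelCover_le (F : Finset ι) {z : ι → ℝ} (hz : ∀ e, 0 ≤ z e)
    (m : ι → ℝ) (N : ℕ) :
    ∑ k ∈ range N, ∑ e ∈ F, levelCover z m k e
      ≤ 2 * (∑ j ∈ range N, 1 / max (j : ℝ) 1) * ∑ e ∈ F, z e := by
  rw [sum_comm, mul_sum]
  refine sum_le_sum fun e _ => ?_
  calc ∑ k ∈ range N, levelCover z m k e
      ≤ ∑ k ∈ range N, z e * (1 / max |m e - k| 1) :=
        sum_le_sum fun k _ => (min_le_right _ _).trans_eq (mul_one_div _ _).symm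
    _ = z e * ∑ k ∈ range N, 1 / max |m e - k| 1 := (mul_sum _ _ _).symm
    _ ≤ z e * (2 * ∑ j ∈ range N, 1 / max (j : ℝ) 1) :=
        mul_le_mul_of_nonneg_left (sum_range_inv_max_abs_sub_le _ _) (hz e)
    _ = 2 * (∑ j ∈ range N, 1 / max (j : ℝ) 1) * z e := by ring

end LevelCover

theorem exists_forall_isClique_mem_bounds {β : Type*} (G : SimpleGraph β) {d w : β → ℝ}
    (hw : ∀ v, 0 ≤ w v) (hadj : ∀ u v, G.Adj u v → d v ≤ d u + w v) :
    ∃ m : Finset β → ℝ, ∀ e : Finset β, G.IsClique (e : Set β) →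
      ∀ v ∈ e, d v - w v ≤ m e ∧ m e ≤ d v := by
  have (e : Finset β) : ∃ x, G.IsClique (e : Set β) → ∀ v ∈ e, d v - w v ≤ x ∧ x ≤ d v := by
    rcases e.eq_empty_or_nonempty with rfl | he
    · exact ⟨0, by simp⟩
    obtain ⟨u, hu, hmin⟩ := e.exists_min_image d he
    refine ⟨d u, fun hcl v hv => ⟨?_, hmin v hv⟩⟩
    rcases eq_or_ne u v with rfl | huv
    · linarith [hw u]
    · linarith [hadj u v (hcl hu hv huv)]
  choose m hm using this
  exact ⟨m, hm⟩

section VertexWeights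

variable {β : Type*} [DecidableEq β]

theorem exists_potential_of_le_path_weight (G : SimpleGraph β) (A B : Finset β) {w : β → ℝ}
    (hw : ∀ v, 0 ≤ w v) {c : ℝ}
    (hpath : ∀ a ∈ A, ∀ b ∈ B, ∀ p : G.Walk a b, p.IsPath → c ≤ ∑ v ∈ p.support.toFinset, w v) :
    ∃ d : β → ℝ, (∀ a ∈ A, d a ≤ w a) ∧ (∀ u v, G.Adj u v → d v ≤ d u + w v) ∧
      ∀ b ∈ B, c ≤ d b := by
  let R (v : β) : Set ℝ :=
    insert c {r | ∃ a ∈ A, ∃ q : G.Walk a v, r = ∑ u ∈ q.support.toFinset, w u}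
  have hbdd (v : β) : BddBelow (R v) := by
    refine ⟨min c 0, ?_⟩
    rintro r (rfl | ⟨a, -, q, rfl⟩)
    · exact min_le_left _ _
    · exact (min_le_right _ _).trans (sum_nonneg fun u _ => hw u)
  refine ⟨fun v => sInf (R v), fun a ha => csInf_le (hbdd a) (Or.inr ⟨a, ha, .nil, by simp⟩),
    fun u v huv => ?_, fun b hb => le_csInf (Set.insert_nonempty _ _) ?_⟩
  · rw [← sub_le_iff_le_add]
    refine le_csInf (Set.insert_nonempty _ _) ?_
    rintro r (hr | ⟨a, ha, q, rfl⟩)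
    · linarith [csInf_le (hbdd v) (Set.mem_insert c _), hw v, hr.ge]
    · have hconcat : ∑ x ∈ (q.concat huv).support.toFinset, w x
          ≤ ∑ x ∈ q.support.toFinset, w x + w v := by
        simp only [SimpleGraph.Walk.support_concat, List.toFinset_append, List.toFinset_cons,
          List.toFinset_nil, insert_empty_eq, union_singleton]
        by_cases hv : v ∈ q.support.toFinset
        · rw [insert_eq_of_mem hv]; linarith [hw v]
        · rw [sum_insert hv, add_comm]
      linarith [csInf_le (hbdd v) (Or.inr ⟨a, ha, q.concat huv, rfl⟩)]
  · rintro r (rfl | ⟨a, ha, q, rfl⟩)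
    · exact le_rfl
    · refine (hpath a ha b hb q.bypass q.bypass_isPath).trans ?_
      refine sum_le_sum_of_subset_of_nonneg (fun x hx => ?_) fun x _ _ => hw x
      simpa using q.support_bypass_subset_support (by simpa using hx)

def vertexLoad (F : Finset (Finset β)) (z : Finset β → ℝ) (v : β) : ℝ :=
  ∑ e ∈ F, if v ∈ e then z e else 0

theorem vertexLoad_nonneg (F : Finset (Finset β)) {z : Finset β → ℝ} (hz : ∀ e, 0 ≤ z e)
    (v : β) : 0 ≤ vertexLoad F z v :=
  sum_nonneg fun e _ => by split_ifs <;> simp [hz]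

theorem sum_ite_inter_nonempty_le_sum_vertexLoad (F : Finset (Finset β)) {z : Finset β → ℝ}
    (hz : ∀ e, 0 ≤ z e) (P : Finset β) :
    ∑ e ∈ F, (if (e ∩ P).Nonempty then z e else 0) ≤ ∑ v ∈ P, vertexLoad F z v := by
  have hterm (e : Finset β) (v : β) : 0 ≤ if v ∈ e then z e else 0 := by
    split_ifs <;> simp [hz]
  unfold vertexLoad
  rw [sum_comm]
  refine sum_le_sum fun e _ => ?_
  split_ifs with h
  · obtain ⟨x, hx⟩ := h
    rw [mem_inter] at hx
    calc z e = if x ∈ e then z e else 0 := (if_pos hx.1).symm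
      _ ≤ ∑ v ∈ P, if v ∈ e then z e else 0 :=
        single_le_sum (f := fun v => if v ∈ e then z e else 0) (fun v _ => hterm e v) hx.2
  · exact sum_nonneg fun v _ => hterm e v

theorem le_sum_vertexLoad_const_mul (F : Finset (Finset β)) {y : Finset β → ℝ}
    (hy : ∀ e, 0 ≤ y e) {c : ℝ} (hc : 0 ≤ c) {P : Finset β}
    (h : 1 ≤ ∑ e ∈ F, if (e ∩ P).Nonempty then y e else 0) :
    c ≤ ∑ v ∈ P, vertexLoad F (fun e => c * y e) v := calc
  c ≤ c * ∑ e ∈ F, if (e ∩ P).Nonempty then y e else 0 := le_mul_of_one_le_right hc h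
  _ = ∑ e ∈ F, if (e ∩ P).Nonempty then c * y e else 0 := by
    simp only [mul_sum, mul_ite, mul_zero]
  _ ≤ ∑ v ∈ P, vertexLoad F (fun e => c * y e) v :=
    sum_ite_inter_nonempty_le_sum_vertexLoad F (fun e => mul_nonneg hc (hy e)) P

theorem fracCliqueCover_le_ofReal_sum (F : Finset (Finset β)) (S : Finset β)
    {γ : Finset β → ℝ} (hγ : ∀ e, 0 ≤ γ e ∧ γ e ≤ 1)
    (hcov : ∀ v ∈ S, 1 ≤ ∑ e ∈ F, if v ∈ e then γ e else 0) :
    fracCliqueCover F S ≤ ENNReal.ofReal (∑ e ∈ F, γ e) :=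
  sInf_le ⟨γ, hγ, hcov, rfl⟩

end VertexWeights

section LevelSet

variable {β : Type*} [Fintype β]

noncomputable def levelSet (d w : β → ℝ) (t : ℝ) : Finset β :=
  {v | d v - w v ≤ t ∧ t < d v}

theorem mem_levelSet {d w : β → ℝ} {t : ℝ} {v : β} :
    v ∈ levelSet d w t ↔ d v - w v ≤ t ∧ t < d v := by
  simp only [levelSet, mem_filter, mem_univ, true_and]

theorem SimpleGraph.Walk.exists_mem_support_levelSet {G : SimpleGraph β} {d w : β → ℝ}
    (hadj : ∀ u v, G.Adj u v → d v ≤ d u + w v) {t : ℝ} {u v : β} (p : G.Walk u v)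
    (hu : d u - w u ≤ t) (hv : t < d v) : ∃ x ∈ p.support, x ∈ levelSet d w t := by
  induction p with
  | nil => exact ⟨_, SimpleGraph.Walk.start_mem_support _, mem_levelSet.2 ⟨hu, hv⟩⟩
  | @cons u u' v h p ih =>
    by_cases hut : t < d u
    · exact ⟨u, SimpleGraph.Walk.start_mem_support _, mem_levelSet.2 ⟨hu, hut⟩⟩
    · obtain ⟨x, hx, hxS⟩ := ih (by linarith [hadj u u' h]) hv
      exact ⟨x, List.mem_cons_of_mem _ hx, hxS⟩

theorem gIsSeparator_levelSet {G : SimpleGraph β} {A B : Finset β} {d w : β → ℝ} {c t : ℝ}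
    (hA : ∀ a ∈ A, d a ≤ w a) (hadj : ∀ u v, G.Adj u v → d v ≤ d u + w v)
    (hB : ∀ b ∈ B, c ≤ d b) (ht : 0 ≤ t) (htc : t < c) :
    gIsSeparator G A B (levelSet d w t) :=
  fun a ha b hb p _ => p.exists_mem_support_levelSet hadj (by linarith [hA a ha])
    (htc.trans_le (hB b hb))

theorem one_le_sum_levelCover_of_mem_levelSet [DecidableEq β] {F : Finset (Finset β)}
    {z : Finset β → ℝ} (hz : ∀ e, 0 ≤ z e) {d : β → ℝ} {m : Finset β → ℝ}
    (hm : ∀ e ∈ F, ∀ v ∈ e, d v - vertexLoad F z v ≤ m e ∧ m e ≤ d v) {t : ℝ} {v : β}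
    (hv : v ∈ levelSet d (vertexLoad F z) t) (hload : 1 ≤ vertexLoad F z v) :
    1 ≤ ∑ e ∈ F, if v ∈ e then levelCover z m t e else 0 := by
  rw [mem_levelSet] at hv
  have hpos : 0 < vertexLoad F z v := one_pos.trans_le hload
  rw [← sum_filter]
  calc 1 ≤ ∑ e ∈ F with v ∈ e, min 1 (z e / vertexLoad F z v) := by
        refine one_le_sum_min_one _ (fun e _ => div_nonneg (hz e) hpos.le) ?_
        rw [← sum_div, sum_filter]
        exact (div_self hpos.ne').ge
    _ ≤ ∑ e ∈ F with v ∈ e, levelCover z m t e := by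
        refine sum_le_sum fun e he => min_le_min_left _ ?_
        obtain ⟨heF, hve⟩ := mem_filter.1 he
        obtain ⟨hm₁, hm₂⟩ := hm e heF v hve
        refine div_le_div_of_nonneg_left (hz e) (by positivity) (max_le ?_ hload)
        exact abs_sub_le_iff.2 ⟨by linarith, by linarith⟩

theorem fracCliqueCover_levelSet_le [DecidableEq β] {F : Finset (Finset β)}
    {z : Finset β → ℝ} (hz : ∀ e, 0 ≤ z e) {d : β → ℝ} {m : Finset β → ℝ}
    (hm : ∀ e ∈ F, ∀ v ∈ e, d v - vertexLoad F z v ≤ m e ∧ m e ≤ d v) {t : ℝ}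
    (hload : ∀ v ∈ levelSet d (vertexLoad F z) t, 1 ≤ vertexLoad F z v) :
    fracCliqueCover F (levelSet d (vertexLoad F z) t)
      ≤ ENNReal.ofReal (∑ e ∈ F, levelCover z m t e) :=
  fracCliqueCover_le_ofReal_sum F _
    (fun e => ⟨levelCover_nonneg hz m t e, levelCover_le_one z m t e⟩)
    fun v hv => one_le_sum_levelCover_of_mem_levelSet hz hm hv (hload v hv)

theorem card_filter_exists_mem_levelSet_lt_one_le [DecidableEq β] (d w : β → ℝ) (N : ℕ) :
    #((range N).filter fun k : ℕ => ∃ v ∈ levelSet d w k, w v < 1) ≤ Fintype.card β := by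
  let T (v : β) := (range N).filter fun k : ℕ => v ∈ levelSet d w k ∧ w v < 1
  -- The interval `[d v - w v, d v)` is shorter than `1`, so it contains at most one integer.
  have hT (v : β) : #(T v) ≤ 1 := by
    refine card_le_one.2 fun k hk l hl => ?_
    simp only [T, mem_filter, mem_levelSet] at hk hl
    obtain ⟨-, ⟨hk₁, hk₂⟩, hw⟩ := hk
    obtain ⟨-, ⟨hl₁, hl₂⟩, -⟩ := hl
    by_contra hne
    exact (one_le_abs_natCast_sub_natCast hne).not_gt
      (abs_sub_lt_iff.2 ⟨by linarith, by linarith⟩)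
  calc #((range N).filter fun k : ℕ => ∃ v ∈ levelSet d w k, w v < 1)
      ≤ #(univ.biUnion T) := by
        refine card_le_card fun k hk => ?_
        obtain ⟨hkN, v, hv, hwv⟩ := mem_filter.1 hk
        exact mem_biUnion.2 ⟨v, mem_univ v, mem_filter.2 ⟨hkN, hv, hwv⟩⟩
    _ ≤ ∑ v, #(T v) := card_biUnion_le
    _ ≤ ∑ _v : β, 1 := sum_le_sum fun v _ => hT v
    _ = Fintype.card β := by simp

theorem exists_level_lt_sum_levelCover_le [DecidableEq β] {ι : Type*} (F : Finset ι)
    {z : ι → ℝ} (hz : ∀ e, 0 ≤ z e) (d w : β → ℝ) (m : ι → ℝ) {N : ℕ}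
    (hN : Fintype.card β < N) :
    ∃ k < N, (∀ v ∈ levelSet d w k, 1 ≤ w v) ∧
      ((N : ℝ) - Fintype.card β) * ∑ e ∈ F, levelCover z m k e
        ≤ 2 * (∑ j ∈ range N, 1 / max (j : ℝ) 1) * ∑ e ∈ F, z e := by
  obtain ⟨k, hk, hcost⟩ := exists_mem_sdiff_sub_mul_le_sum (range N)
    ((range N).filter fun k : ℕ => ∃ v ∈ levelSet d w k, w v < 1)
    (fun k _ => sum_nonneg fun e _ => levelCover_nonneg hz m k e)
    (card_filter_exists_mem_levelSet_lt_one_le d w N) (by simpa using hN)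
  simp only [mem_sdiff, mem_range, mem_filter, not_and, not_exists, not_lt] at hk
  rw [card_range] at hcost
  exact ⟨k, hk.1, fun v hv => hk.2 hk.1 v hv,
    hcost.trans (sum_range_sum_levelCover_le F hz m N)⟩

end LevelSet

theorem clique_menger_separator_general {β : Type*} [Fintype β] [DecidableEq β]
    (G : SimpleGraph β) (A B : Finset β) (F : Finset (Finset β))
    (hF : ∀ e ∈ F, G.IsClique (e : Set β))
    (f : ℝ)
    (y : Finset β → ℝ) (hy01 : ∀ e, 0 ≤ y e ∧ y e ≤ 1)
    (hyblock : ∀ a ∈ A, ∀ b ∈ B, ∀ p : G.Walk a b, p.IsPath →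
      1 ≤ ∑ e ∈ F, if (e ∩ p.support.toFinset).Nonempty then y e else 0)
    (hycost : ∑ e ∈ F, y e ≤ f) :
    ∃ S : Finset β, gIsSeparator G A B S ∧
      fracCliqueCover F S ≤
        ENNReal.ofReal ((8 + 4 * Real.log (Fintype.card β)) * f) := by
  set n := Fintype.card β
  rcases Nat.eq_zero_or_pos n with hn | hn
  · have : IsEmpty β := Fintype.card_eq_zero_iff.1 hn
    exact ⟨∅, fun a => isEmptyElim a,
      (fracCliqueCover_le_ofReal_sum F ∅ (γ := 0) (by simp) (by simp)).trans (by simp)⟩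
  set N := 4 * n
  set z : Finset β → ℝ := fun e => N * y e
  have hz (e : Finset β) : 0 ≤ z e := mul_nonneg N.cast_nonneg (hy01 e).1
  set w := vertexLoad F z
  obtain ⟨d, hdA, hdadj, hdB⟩ := exists_potential_of_le_path_weight G A B
    (vertexLoad_nonneg F hz) fun a ha b hb p hp =>
      le_sum_vertexLoad_const_mul F (fun e => (hy01 e).1) N.cast_nonneg (hyblock a ha b hb p hp)
  obtain ⟨m, hm⟩ := exists_forall_isClique_mem_bounds G (vertexLoad_nonneg F hz) hdadj
  obtain ⟨k, hkN, hgood, hk⟩ := exists_level_lt_sum_levelCover_le F hz d w m (N := N) (by omega)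
  refine ⟨levelSet d w k, gIsSeparator_levelSet hdA hdadj hdB k.cast_nonneg (mod_cast hkN),
    (fracCliqueCover_levelSet_le hz (fun e he => hm e (hF e he)) hgood).trans
      (ENNReal.ofReal_le_ofReal ?_)⟩
  set C := ∑ e ∈ F, levelCover z m k e
  set H := ∑ j ∈ range N, 1 / max (j : ℝ) 1
  have hf : 0 ≤ f := (sum_nonneg fun e _ => (hy01 e).1).trans hycost
  have hC : (n : ℝ) * (3 * C) ≤ n * (8 * H * f) := calc
    (n : ℝ) * (3 * C) = ((N : ℝ) - n) * C := by push_cast [N]; ring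
    _ ≤ 2 * H * ∑ e ∈ F, z e := hk
    _ = n * (8 * H * ∑ e ∈ F, y e) := by rw [← mul_sum]; push_cast [N]; ring
    _ ≤ n * (8 * H * f) := by gcongr
  nlinarith [le_of_mul_le_mul_left hC (by exact_mod_cast hn),
    sum_range_four_mul_inv_max_one_le hn]

/-- From a fractional solution of the clique-blocking LP of cost at most
`f` one gets an `(A,B)`-separator `S` with `ρ*_{G,F}(S) ≤ (8 + 4 ln n)·f`. -/
theorem clique_menger_separator {β : Type*} [Fintype β] [DecidableEq β]
    (G : SimpleGraph β) (A B : Finset β) (F : Finset (Finset β))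
    (hF : ∀ e ∈ F, G.IsClique (e : Set β))
    (f : ℝ) (hf : 0 < f)
    (y : Finset β → ℝ) (hy01 : ∀ e, 0 ≤ y e ∧ y e ≤ 1)
    (hyblock : ∀ a ∈ A, ∀ b ∈ B, ∀ p : G.Walk a b, p.IsPath →
      1 ≤ ∑ e ∈ F, if (e ∩ p.support.toFinset).Nonempty then y e else 0)
    (hycost : ∑ e ∈ F, y e ≤ f) :
    ∃ S : Finset β, gIsSeparator G A B S ∧
      fracCliqueCover F S ≤
        ENNReal.ofReal ((8 + 4 * Real.log (Fintype.card β)) * f) :=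
  clique_menger_separator_general G A B F hF f y hy01 hyblock hycost
end

section
/- Let G be a finite simple graph, let A, B ⊆ V(G), let F be a finite family of cliques of G with |F| ≥ 2, and let f > 0. Let 𝒫 denote the (finite) set of all A-B paths in G. Suppose there exists z : 𝒫 → [0,1] such that ∑_{P ∈ 𝒫 : e ∩ V(P) ≠ ∅} z(P) ≤ 1 for every e ∈ F and ∑_{P ∈ 𝒫} z(P) > f. Then there exist paths P_1, …, P_ℓ ∈ 𝒫 with ℓ = ⌈f·log₂(|F|)⌉ (repetitions allowed) such that for every e ∈ F the number of indices i ∈ {1,…,ℓ} with e ∩ V(P_i) ≠ ∅ is less than 6·log₂(|F|). -/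
open Finset
open scoped ENNReal

/-- Auxiliary: `k^k ≤ 3^k · k!` over the reals. -/
lemma aux_pow_le_three_pow_mul_factorial : ∀ k : ℕ, (k:ℝ)^k ≤ 3^k * (k.factorial : ℝ) := by
  intro k
  induction k with
  | zero => simp
  | succ n ih =>
    have hstep : ((n:ℝ)+1)^n ≤ 3 * (n:ℝ)^n := by
      rcases Nat.eq_zero_or_pos n with h0 | hpos
      · subst h0; norm_num
      · have hn : (0:ℝ) < n := by exact_mod_cast hpos
        have h1 : (n:ℝ)+1 ≤ n * Real.exp (1/n) := by
          have := Real.add_one_le_exp (1/(n:ℝ))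
          have h2 : (n:ℝ) * (1/n + 1) ≤ n * Real.exp (1/n) :=
            mul_le_mul_of_nonneg_left this hn.le
          have h3 : (n:ℝ) * (1/n + 1) = n + 1 := by field_simp; ring
          linarith
        calc ((n:ℝ)+1)^n ≤ ((n:ℝ) * Real.exp (1/n))^n := by
              apply pow_le_pow_left₀ (by positivity) h1
          _ = (n:ℝ)^n * Real.exp (1/n) ^ n := mul_pow _ _ _
          _ = (n:ℝ)^n * Real.exp ((n:ℕ) * (1/n)) := by rw [Real.exp_nat_mul]
          _ = (n:ℝ)^n * Real.exp 1 := by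
              rw [mul_one_div, div_self hn.ne']
          _ ≤ 3 * (n:ℝ)^n := by
              have := Real.exp_one_lt_d9
              have hpow : (0:ℝ) ≤ (n:ℝ)^n := by positivity
              nlinarith
    have hnn : (0:ℝ) ≤ (n:ℝ)+1 := by positivity
    calc ((n+1:ℕ):ℝ)^(n+1) = ((n:ℝ)+1) * ((n:ℝ)+1)^n := by push_cast; ring
      _ ≤ ((n:ℝ)+1) * (3 * (n:ℝ)^n) := by nlinarith [pow_nonneg hnn n]
      _ ≤ ((n:ℝ)+1) * (3 * (3^n * (n.factorial:ℝ))) := by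
          have : (3:ℝ) * (n:ℝ)^n ≤ 3 * (3^n * n.factorial) := by nlinarith
          nlinarith
      _ = 3^(n+1) * ((n+1).factorial : ℝ) := by
          rw [Nat.factorial_succ]; push_cast; ring

/-- Auxiliary: a path (of the sigma type) meets the clique `e`. -/
abbrev pHit {β : Type*} [DecidableEq β] {G : SimpleGraph β}
    (e : Finset β) (P : (a : β) × (b : β) × G.Path a b) : Prop :=
  (e ∩ (P.2.2 : G.Walk P.1 P.2.1).support.toFinset).Nonempty

set_option maxHeartbeats 8000000 in
/-- From a feasible solution of the dual path-packing LP of value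
greater than `f` one gets `⌈f·log₂|F|⌉` many `A`-`B` paths such that every clique of `F`
intersects fewer than `6·log₂|F|` of them. -/
theorem clique_menger_paths {β : Type*} [Fintype β] [DecidableEq β]
    (G : SimpleGraph β) [DecidableRel G.Adj] (A B : Finset β)
    (F : Finset (Finset β)) (hF : ∀ e ∈ F, G.IsClique (e : Set β)) (hF2 : 2 ≤ F.card)
    (f : ℝ) (hf : 0 < f)
    (z : ((a : β) × (b : β) × G.Path a b) → ℝ) (hz01 : ∀ P, 0 ≤ z P ∧ z P ≤ 1)
    (hzpack : ∀ e ∈ F,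
      ∑ P ∈ Finset.univ.filter (fun P : (a : β) × (b : β) × G.Path a b =>
          P.1 ∈ A ∧ P.2.1 ∈ B ∧ (e ∩ (P.2.2 : G.Walk P.1 P.2.1).support.toFinset).Nonempty),
        z P ≤ 1)
    (hztotal : f < ∑ P ∈ Finset.univ.filter (fun P : (a : β) × (b : β) × G.Path a b =>
        P.1 ∈ A ∧ P.2.1 ∈ B), z P) :
    ∃ P : Fin ⌈f * Real.logb 2 (F.card : ℝ)⌉₊ → (a : β) × (b : β) × G.Path a b,
      (∀ i, (P i).1 ∈ A ∧ (P i).2.1 ∈ B) ∧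
      ∀ e ∈ F,
        (({i | (e ∩ ((P i).2.2 : G.Walk (P i).1 (P i).2.1).support.toFinset).Nonempty} :
            Set (Fin ⌈f * Real.logb 2 (F.card : ℝ)⌉₊)).ncard : ℝ) <
          6 * Real.logb 2 (F.card : ℝ) := by
  classical
  set L : ℝ := Real.logb 2 (F.card : ℝ) with hLdef
  set ℓ : ℕ := ⌈f * L⌉₊ with hℓdef
  have hM2 : (2:ℝ) ≤ (F.card : ℝ) := by exact_mod_cast hF2
  have hMpos : (0:ℝ) < (F.card : ℝ) := by linarith
  have hL1 : 1 ≤ L := by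
    rw [hLdef, show (1:ℝ) = Real.logb 2 2 by simp]
    exact Real.logb_le_logb_of_le one_lt_two two_pos hM2
  have hLpos : 0 < L := by linarith
  -- the set of A-B paths
  set PP : Finset ((a : β) × (b : β) × G.Path a b) :=
    Finset.univ.filter (fun P => P.1 ∈ A ∧ P.2.1 ∈ B) with hPPdef
  set Z : ℝ := ∑ P ∈ PP, z P with hZdef
  have hfZ : f < Z := hztotal
  have hZpos : 0 < Z := lt_trans hf hfZ
  have hPPne : PP.Nonempty := by
    rcases Finset.eq_empty_or_nonempty PP with h | h
    · exfalso; rw [h] at hZdef; simp at hZdef; rw [hZdef] at hZpos; exact lt_irrefl 0 hZpos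
    · exact h
  obtain ⟨P0, hP0⟩ := hPPne
  have hP0AB : P0.1 ∈ A ∧ P0.2.1 ∈ B := (Finset.mem_filter.mp hP0).2
  by_cases hcase : (ℓ:ℝ) < 6 * L
  · -- trivial case: few paths altogether
    refine ⟨fun _ => P0, fun i => hP0AB, fun e he => ?_⟩
    have hsub : ({i | (e ∩ ((P0).2.2 : G.Walk (P0).1 (P0).2.1).support.toFinset).Nonempty} :
        Set (Fin ℓ)).ncard ≤ ℓ := by
      have h1 := Set.ncard_le_ncard (Set.subset_univ
        ({i | (e ∩ ((P0).2.2 : G.Walk (P0).1 (P0).2.1).support.toFinset).Nonempty} :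
          Set (Fin ℓ))) Set.finite_univ
      rwa [Set.ncard_univ, Nat.card_eq_fintype_card, Fintype.card_fin] at h1
    calc (_ : ℝ) ≤ (ℓ:ℝ) := by exact_mod_cast hsub
      _ < 6 * L := hcase
  · -- main case
    push_neg at hcase
    set k : ℕ := ⌈6 * L⌉₊ with hkdef
    have hk6L : 6 * L ≤ (k:ℝ) := Nat.le_ceil _
    have hkℓ : k ≤ ℓ := Nat.ceil_le.mpr hcase
    have hkpos : 0 < k := Nat.ceil_pos.mpr (by linarith)
    have hℓlt : (ℓ:ℝ) < f * L + 1 := Nat.ceil_lt_add_one (by positivity)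
    have hklt : (k:ℝ) < 6 * L + 1 := Nat.ceil_lt_add_one (by positivity)
    have hfL5 : 5 ≤ f * L := by
      have h6 : (6:ℝ) ≤ (ℓ:ℝ) := le_trans (by linarith) hcase
      linarith
    have hznn : ∀ P, 0 ≤ z P := fun P => (hz01 P).1
    set Ω : Finset (Fin ℓ → (a : β) × (b : β) × G.Path a b) :=
      Fintype.piFinset (fun _ => PP) with hΩdef
    set w : (Fin ℓ → (a : β) × (b : β) × G.Path a b) → ℝ := fun ω => ∏ i, z (ω i) with hwdef
    have hwnn : ∀ ω, 0 ≤ w ω := fun ω => Finset.prod_nonneg fun i _ => hznn _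
    set HH : Finset β → ℝ := fun e => ∑ P ∈ PP, if pHit e P then z P else 0 with hHHdef
    have hHnn : ∀ e, 0 ≤ HH e := fun e => Finset.sum_nonneg fun P _ => by
      split
      · exact hznn _
      · exact le_refl 0
    have hHle : ∀ e ∈ F, HH e ≤ 1 := by
      intro e he
      have h1 := hzpack e he
      calc HH e = ∑ P ∈ PP.filter (fun P => pHit e P), z P := (Finset.sum_filter _ _).symm
        _ = ∑ P ∈ Finset.univ.filter (fun P : (a : β) × (b : β) × G.Path a b =>
              P.1 ∈ A ∧ P.2.1 ∈ B ∧ (e ∩ (P.2.2 : G.Walk P.1 P.2.1).support.toFinset).Nonempty),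
              z P := by
            rw [hPPdef, Finset.filter_filter]
            apply Finset.sum_congr _ (fun _ _ => rfl)
            apply Finset.filter_congr
            intro P _
            simp [pHit, and_assoc]
        _ ≤ 1 := h1
    -- counting function
    set cnt : Finset β → (Fin ℓ → (a : β) × (b : β) × G.Path a b) → ℕ :=
      fun e ω => (Finset.univ.filter (fun i => pHit e (ω i))).card with hcntdef
    -- key identity 1 : total weight
    have key1 : ∑ ω ∈ Ω, w ω = Z ^ ℓ := by
      calc ∑ ω ∈ Ω, w ω = ∏ _i : Fin ℓ, ∑ P ∈ PP, z P := (Finset.prod_univ_sum _ _).symm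
        _ = Z ^ ℓ := by rw [← hZdef]; simp
    -- key identity 2 : weight of tuples hitting e on a fixed index set S
    have key2 : ∀ (e : Finset β), ∀ S : Finset (Fin ℓ), S.card = k →
        ∑ ω ∈ Ω, ∏ i, (if i ∈ S then (if pHit e (ω i) then z (ω i) else 0) else z (ω i))
          = HH e ^ k * Z ^ (ℓ - k) := by
      intro e S hScard
      have h1 : ∑ ω ∈ Ω, ∏ i, (if i ∈ S then (if pHit e (ω i) then z (ω i) else 0) else z (ω i))
          = ∏ i : Fin ℓ, ∑ P ∈ PP, (if i ∈ S then (if pHit e P then z P else 0) else z P) :=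
        (Finset.prod_univ_sum (fun _ : Fin ℓ => PP)
          (fun i P => if i ∈ S then (if pHit e P then z P else 0) else z P)).symm
      rw [h1]
      have h2 : ∀ i : Fin ℓ,
          (∑ P ∈ PP, (if i ∈ S then (if pHit e P then z P else 0) else z P))
            = if i ∈ S then HH e else Z := by
        intro i
        by_cases hi : i ∈ S
        · rw [if_pos hi]
          rw [hHHdef]
          exact Finset.sum_congr rfl (fun P _ => if_pos hi)
        · rw [if_neg hi]
          rw [hZdef]
          exact Finset.sum_congr rfl (fun P _ => if_neg hi)
      rw [Finset.prod_congr rfl (fun i _ => h2 i)]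
      rw [Finset.prod_ite (fun _ => HH e) (fun _ => Z), Finset.prod_const, Finset.prod_const]
      congr 1
      · congr 1
        rw [Finset.filter_univ_mem, hScard]
      · congr 1
        have : Finset.univ.filter (fun i => ¬ i ∈ S) = Finset.univ \ S := by
          ext i; simp
        rw [this, Finset.card_univ_diff, Fintype.card_fin, hScard]
    -- key bound 3 : per-clique bad weight
    have key3 : ∀ e ∈ F,
        ∑ ω ∈ Ω, (if k ≤ cnt e ω then w ω else 0)
          ≤ (ℓ.choose k : ℝ) * Z ^ (ℓ - k) := by
      intro e he
      have step1 : ∀ ω ∈ Ω, (if k ≤ cnt e ω then w ω else 0)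
          ≤ ∑ S ∈ Finset.powersetCard k (Finset.univ : Finset (Fin ℓ)),
              ∏ i, (if i ∈ S then (if pHit e (ω i) then z (ω i) else 0) else z (ω i)) := by
        intro ω _
        have hgnn : ∀ S ∈ Finset.powersetCard k (Finset.univ : Finset (Fin ℓ)),
            0 ≤ ∏ i, (if i ∈ S then (if pHit e (ω i) then z (ω i) else 0) else z (ω i)) := by
          intro S _
          apply Finset.prod_nonneg
          intro i _
          split
          · split
            · exact hznn _
            · exact le_refl 0
          · exact hznn _
        split_ifs with h
        · obtain ⟨S, hSsub, hScard⟩ := Finset.exists_subset_card_eq h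
          have hSmem : S ∈ Finset.powersetCard k (Finset.univ : Finset (Fin ℓ)) :=
            Finset.mem_powersetCard_univ.mpr hScard
          have hwS : w ω = ∏ i, (if i ∈ S then (if pHit e (ω i) then z (ω i) else 0)
              else z (ω i)) := by
            apply Finset.prod_congr rfl
            intro i _
            by_cases hi : i ∈ S
            · rw [if_pos hi, if_pos (Finset.mem_filter.mp (hSsub hi)).2]
            · rw [if_neg hi]
          rw [hwS]
          exact Finset.single_le_sum hgnn hSmem
        · exact Finset.sum_nonneg hgnn
      calc ∑ ω ∈ Ω, (if k ≤ cnt e ω then w ω else 0)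
          ≤ ∑ ω ∈ Ω, ∑ S ∈ Finset.powersetCard k (Finset.univ : Finset (Fin ℓ)),
              ∏ i, (if i ∈ S then (if pHit e (ω i) then z (ω i) else 0) else z (ω i)) :=
            Finset.sum_le_sum step1
        _ = ∑ S ∈ Finset.powersetCard k (Finset.univ : Finset (Fin ℓ)),
              ∑ ω ∈ Ω, ∏ i, (if i ∈ S then (if pHit e (ω i) then z (ω i) else 0)
                else z (ω i)) := Finset.sum_comm
        _ = ∑ S ∈ Finset.powersetCard k (Finset.univ : Finset (Fin ℓ)),
              HH e ^ k * Z ^ (ℓ - k) :=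
            Finset.sum_congr rfl (fun S hS => key2 e S (Finset.mem_powersetCard_univ.mp hS))
        _ = ((Finset.powersetCard k (Finset.univ : Finset (Fin ℓ))).card : ℝ)
              * (HH e ^ k * Z ^ (ℓ - k)) := by rw [Finset.sum_const, nsmul_eq_mul]
        _ = (ℓ.choose k : ℝ) * (HH e ^ k * Z ^ (ℓ - k)) := by
            rw [Finset.card_powersetCard, Finset.card_univ, Fintype.card_fin]
        _ ≤ (ℓ.choose k : ℝ) * Z ^ (ℓ - k) := by
            have h1 : HH e ^ k ≤ 1 := pow_le_one₀ (hHnn e) (hHle e he)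
            have h2 : (0:ℝ) ≤ Z ^ (ℓ - k) := by positivity
            have h3 : (0:ℝ) ≤ (ℓ.choose k : ℝ) := by positivity
            have h4 : HH e ^ k * Z ^ (ℓ - k) ≤ Z ^ (ℓ - k) := by
              calc HH e ^ k * Z ^ (ℓ - k) ≤ 1 * Z ^ (ℓ - k) :=
                    mul_le_mul_of_nonneg_right h1 h2
                _ = Z ^ (ℓ - k) := one_mul _
            exact mul_le_mul_of_nonneg_left h4 h3
    -- union bound over cliques
    have key4 : ∑ ω ∈ Ω.filter (fun ω => ¬ (∀ e ∈ F, cnt e ω < k)), w ω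
        ≤ ∑ e ∈ F, ∑ ω ∈ Ω, (if k ≤ cnt e ω then w ω else 0) := by
      have hterm : ∀ ω ∈ Ω.filter (fun ω => ¬ (∀ e ∈ F, cnt e ω < k)),
          w ω ≤ ∑ e ∈ F, (if k ≤ cnt e ω then w ω else 0) := by
        intro ω hω
        obtain ⟨hωΩ, hbad⟩ := Finset.mem_filter.mp hω
        push_neg at hbad
        obtain ⟨e0, he0F, he0⟩ := hbad
        calc w ω = (if k ≤ cnt e0 ω then w ω else 0) := (if_pos he0).symm
          _ ≤ ∑ e ∈ F, (if k ≤ cnt e ω then w ω else 0) :=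
            Finset.single_le_sum
              (fun e _ => by
                have h : (0:ℝ) ≤ if k ≤ cnt e ω then w ω else 0 := by
                  split
                  · exact hwnn ω
                  · exact le_refl 0
                exact h) he0F
      calc ∑ ω ∈ Ω.filter (fun ω => ¬ (∀ e ∈ F, cnt e ω < k)), w ω
          ≤ ∑ ω ∈ Ω.filter (fun ω => ¬ (∀ e ∈ F, cnt e ω < k)),
              ∑ e ∈ F, (if k ≤ cnt e ω then w ω else 0) := Finset.sum_le_sum hterm
        _ ≤ ∑ ω ∈ Ω, ∑ e ∈ F, (if k ≤ cnt e ω then w ω else 0) := by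
            apply Finset.sum_le_sum_of_subset_of_nonneg (Finset.filter_subset _ _)
            intro ω _ _
            apply Finset.sum_nonneg
            intro e _
            split
            · exact hwnn ω
            · exact le_refl 0
        _ = ∑ e ∈ F, ∑ ω ∈ Ω, (if k ≤ cnt e ω then w ω else 0) := Finset.sum_comm
    -- numeric bound
    have hnum : (F.card : ℝ) * (ℓ.choose k : ℝ) < f ^ k := by
      have hfk' : (ℓ.choose k : ℝ) * (k.factorial : ℝ) ≤ (ℓ:ℝ)^k := by
        have hnat : k.factorial * ℓ.choose k ≤ ℓ^k := by
          rw [← Nat.descFactorial_eq_factorial_mul_choose]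
          exact Nat.descFactorial_le_pow _ _
        calc (ℓ.choose k : ℝ) * (k.factorial : ℝ)
            = ((k.factorial * ℓ.choose k : ℕ) : ℝ) := by push_cast; ring
          _ ≤ ((ℓ^k : ℕ) : ℝ) := by exact_mod_cast hnat
          _ = (ℓ:ℝ)^k := by push_cast; ring
      have hkk := aux_pow_le_three_pow_mul_factorial k
      have h3ℓ : 3 * (ℓ:ℝ) ≤ (3/5) * (f * k) := by
        have h1 : 3 * (ℓ:ℝ) ≤ 3 * (f*L) + 3 := by linarith
        have h2 : (3/5) * (f * (6*L)) ≤ (3/5) * (f * k) := by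
          have := mul_le_mul_of_nonneg_left hk6L hf.le
          nlinarith
        nlinarith
      -- the rpow computation
      have hc1 : (F.card : ℝ) * (3/5)^k < 1 := by
        have hb1 : ((3/5:ℝ))^(k:ℕ) = ((3/5:ℝ)) ^ ((k:ℕ):ℝ) := (Real.rpow_natCast _ _).symm
        have hb2 : (3/5:ℝ)^((k:ℕ):ℝ) ≤ (3/5:ℝ)^(6*L) :=
          Real.rpow_le_rpow_of_exponent_ge (by norm_num) (by norm_num) hk6L
        have hM : (F.card:ℝ) = (2:ℝ)^L := by
          rw [hLdef, Real.rpow_logb two_pos (by norm_num) hMpos]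
        have hsplit : (3/5:ℝ)^(6*L) = ((3/5:ℝ)^(6:ℝ))^L :=
          Real.rpow_mul (by norm_num) 6 L
        have h6 : ((3/5:ℝ)^(6:ℝ)) = (3/5:ℝ)^(6:ℕ) := by
          rw [show ((6:ℝ)) = ((6:ℕ):ℝ) by norm_num, Real.rpow_natCast]
        calc (F.card : ℝ) * (3/5)^k ≤ (2:ℝ)^L * (3/5:ℝ)^(6*L) := by
              rw [hM, hb1]
              exact mul_le_mul_of_nonneg_left hb2 (Real.rpow_nonneg (by norm_num) L)
          _ = ((2:ℝ) * ((3/5:ℝ)^(6:ℝ)))^L := by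
              rw [hsplit, ← Real.mul_rpow (by norm_num) (by positivity)]
          _ ≤ ((2:ℝ) * ((3/5:ℝ)^(6:ℝ)))^(1:ℝ) := by
              apply Real.rpow_le_rpow_of_exponent_ge _ _ hL1
              · rw [h6]; norm_num
              · rw [h6]; norm_num
          _ < 1 := by rw [Real.rpow_one, h6]; norm_num
      have hkkpos : (0:ℝ) < (k:ℝ)^k := by
        have : (0:ℝ) < (k:ℝ) := by exact_mod_cast hkpos
        positivity
      have hs : (F.card:ℝ) * (ℓ.choose k : ℝ) * (k:ℝ)^k < f ^ k * (k:ℝ)^k := by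
        have hccnn : (0:ℝ) ≤ (F.card:ℝ) * (ℓ.choose k : ℝ) := by positivity
        calc (F.card:ℝ) * (ℓ.choose k : ℝ) * (k:ℝ)^k
            ≤ (F.card:ℝ) * (ℓ.choose k : ℝ) * (3^k * (k.factorial : ℝ)) :=
              mul_le_mul_of_nonneg_left hkk hccnn
          _ = ((F.card:ℝ) * 3^k) * ((ℓ.choose k : ℝ) * (k.factorial : ℝ)) := by ring
          _ ≤ ((F.card:ℝ) * 3^k) * (ℓ:ℝ)^k := by
              apply mul_le_mul_of_nonneg_left hfk'
              positivity
          _ = (F.card:ℝ) * (3*(ℓ:ℝ))^k := by rw [mul_pow]; ring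
          _ ≤ (F.card:ℝ) * ((3/5) * (f * k))^k := by
              apply mul_le_mul_of_nonneg_left _ hMpos.le
              exact pow_le_pow_left₀ (by positivity) h3ℓ k
          _ = ((F.card:ℝ) * (3/5)^k) * (f^k * (k:ℝ)^k) := by
              rw [mul_pow, mul_pow]; ring
          _ < 1 * (f^k * (k:ℝ)^k) := by
              apply mul_lt_mul_of_pos_right hc1
              have : (0:ℝ) < (k:ℝ) := by exact_mod_cast hkpos
              positivity
          _ = f ^ k * (k:ℝ)^k := one_mul _
      exact lt_of_mul_lt_mul_right hs hkkpos.le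
    -- conclusion : the good set is nonempty
    have hbadlt : ∑ ω ∈ Ω.filter (fun ω => ¬ (∀ e ∈ F, cnt e ω < k)), w ω < Z ^ ℓ := by
      have h1 : ∑ e ∈ F, ∑ ω ∈ Ω, (if k ≤ cnt e ω then w ω else 0)
          ≤ (F.card : ℝ) * ((ℓ.choose k : ℝ) * Z ^ (ℓ - k)) := by
        calc ∑ e ∈ F, ∑ ω ∈ Ω, (if k ≤ cnt e ω then w ω else 0)
            ≤ ∑ _e ∈ F, (ℓ.choose k : ℝ) * Z ^ (ℓ - k) := Finset.sum_le_sum key3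
          _ = (F.card : ℝ) * ((ℓ.choose k : ℝ) * Z ^ (ℓ - k)) := by
              rw [Finset.sum_const, nsmul_eq_mul]
      have h2 : (F.card : ℝ) * ((ℓ.choose k : ℝ) * Z ^ (ℓ - k)) < Z ^ ℓ := by
        have hZp : (0:ℝ) < Z ^ (ℓ - k) := by positivity
        have h3 : (F.card : ℝ) * (ℓ.choose k : ℝ) * Z ^ (ℓ - k) < f ^ k * Z ^ (ℓ - k) :=
          mul_lt_mul_of_pos_right hnum hZp
        have h4 : f ^ k ≤ Z ^ k := pow_le_pow_left₀ hf.le hfZ.le k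
        have h5 : f ^ k * Z ^ (ℓ - k) ≤ Z ^ k * Z ^ (ℓ - k) :=
          mul_le_mul_of_nonneg_right h4 hZp.le
        have h6 : Z ^ k * Z ^ (ℓ - k) = Z ^ ℓ := by
          rw [← pow_add, Nat.add_sub_cancel' hkℓ]
        nlinarith
      calc ∑ ω ∈ Ω.filter (fun ω => ¬ (∀ e ∈ F, cnt e ω < k)), w ω
          ≤ ∑ e ∈ F, ∑ ω ∈ Ω, (if k ≤ cnt e ω then w ω else 0) := key4
        _ ≤ (F.card : ℝ) * ((ℓ.choose k : ℝ) * Z ^ (ℓ - k)) := h1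
        _ < Z ^ ℓ := h2
    have hgoodpos : 0 < ∑ ω ∈ Ω.filter (fun ω => ∀ e ∈ F, cnt e ω < k), w ω := by
      have hsplit := Finset.sum_filter_add_sum_filter_not Ω (fun ω => ∀ e ∈ F, cnt e ω < k) w
      rw [key1] at hsplit
      linarith
    obtain ⟨ω, hω⟩ := Finset.nonempty_of_sum_ne_zero hgoodpos.ne'
    obtain ⟨hωΩ, hωgood⟩ := Finset.mem_filter.mp hω
    have hωPP : ∀ i, ω i ∈ PP := fun i => Fintype.mem_piFinset.mp hωΩ i
    refine ⟨ω, fun i => (Finset.mem_filter.mp (hωPP i)).2, fun e he => ?_⟩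
    have hc := hωgood e he
    have hset : ({i | (e ∩ ((ω i).2.2 : G.Walk (ω i).1 (ω i).2.1).support.toFinset).Nonempty} :
        Set (Fin ℓ)) = ↑(Finset.univ.filter (fun i => pHit e (ω i))) := by
      ext i
      simp [pHit]
    rw [hset, Set.ncard_coe_finset]
    have hc' : (Finset.univ.filter (fun i => pHit e (ω i))).card < k := hc
    have hcr : ((Finset.univ.filter (fun i => pHit e (ω i))).card : ℝ) + 1 ≤ (k:ℝ) := by
      exact_mod_cast Nat.succ_le_of_lt hc'
    linarith
end

section
/- Let H be a hypergraph admitting a tree decomposition of fractional hypertree width at most ω. Then for every set S ⊆ V(H), ρ*_H(S) ≤ α_H(S)·ω. -/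
open Finset
open scoped ENNReal

/-- A hypergraph: a finite vertex set, a finite set of nonempty hyperedges covering
all vertices. -/
structure FinHypergraph (α : Type*) where
  V : Finset α
  E : Finset (Finset α)
  edge_sub : ∀ e ∈ E, e ⊆ V
  edge_nonempty : ∀ e ∈ E, e.Nonempty
  no_isolated : ∀ v ∈ V, ∃ e ∈ E, v ∈ e

/-- Degeneracy of a graph restricted to a finite vertex set `W`: the least `d` such that
every nonempty subset has a vertex with at most `d` neighbours inside the subset. -/
noncomputable def degeneracyOn {β : Type*} (G : SimpleGraph β) (W : Finset β) : ℕ :=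
  sInf {d : ℕ | ∀ W' ⊆ W, W'.Nonempty → ∃ v ∈ W', ((W' : Set β) ∩ G.neighborSet v).ncard ≤ d}

namespace FinHypergraph

variable {α : Type*}

/-- The primal (Gaifman) graph of a hypergraph. -/
def primal (H : FinHypergraph α) : SimpleGraph α where
  Adj u v := u ≠ v ∧ ∃ e ∈ H.E, u ∈ e ∧ v ∈ e
  symm := by
    refine ⟨?_⟩
    rintro u v ⟨hne, e, he, hu, hv⟩
    exact ⟨hne.symm, e, he, hv, hu⟩
  loopless := by
    refine ⟨?_⟩
    rintro u ⟨hne, -⟩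
    exact hne rfl

/-- `S` is an `(A,B)`-separator in `H`: every path of the primal graph from a vertex
of `A` to a vertex of `B` meets `S`. -/
def IsSeparator (H : FinHypergraph α) (A B S : Finset α) : Prop :=
  ∀ a ∈ A, ∀ b ∈ B, ∀ p : H.primal.Walk a b, p.IsPath → ∃ v ∈ p.support, v ∈ S

/-- `x` is a fractional `(A,B)`-separator in `H`. -/
def IsFracSeparator [DecidableEq α] (H : FinHypergraph α) (A B : Finset α) (x : α → ℝ) : Prop :=
  ∀ a ∈ A, ∀ b ∈ B, ∀ p : H.primal.Walk a b, p.IsPath →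
    1 ≤ ∑ w ∈ p.support.toFinset, x w

/-- Fractional edge cover number of a weight function `x` on vertices. -/
noncomputable def fracCover [DecidableEq α] (H : FinHypergraph α) (x : α → ℝ) : ℝ :=
  sInf {c : ℝ | ∃ y : Finset α → ℝ, (∀ e, 0 ≤ y e ∧ y e ≤ 1) ∧
    (∀ v ∈ H.V, x v ≤ ∑ e ∈ H.E, if v ∈ e then y e else 0) ∧
    c = ∑ e ∈ H.E, y e}

/-- Fractional edge cover number `ρ*_H(S)` of a vertex set. -/
noncomputable def fracCoverSet [DecidableEq α] (H : FinHypergraph α) (S : Finset α) : ℝ :=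
  H.fracCover (fun v => if v ∈ S then 1 else 0)

/-- Fractional `E`-edge cover number of `x` (`∞` if no fractional `E`-edge cover exists). -/
noncomputable def fracCoverE [DecidableEq α] (H : FinHypergraph α) (E : Finset (Finset α))
    (x : α → ℝ) : ℝ≥0∞ :=
  sInf {c : ℝ≥0∞ | ∃ y : Finset α → ℝ, (∀ e, 0 ≤ y e ∧ y e ≤ 1) ∧
    (∀ v ∈ H.V, x v ≤ ∑ e ∈ E, if v ∈ e then y e else 0) ∧
    c = ENNReal.ofReal (∑ e ∈ E, y e)}

/-- Fractional `E`-edge cover number `ρ*_{H,E}(S)` of a vertex set. -/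
noncomputable def fracCoverESet [DecidableEq α] (H : FinHypergraph α) (E : Finset (Finset α))
    (S : Finset α) : ℝ≥0∞ :=
  H.fracCoverE E (fun v => if v ∈ S then 1 else 0)

/-- Integral edge cover number `ρ_H(S)`. -/
noncomputable def intCover [DecidableEq α] (H : FinHypergraph α) (S : Finset α) : ℕ :=
  sInf {n : ℕ | ∃ F ⊆ H.E, S ⊆ F.biUnion id ∧ F.card = n}

/-- Independence number `α_H(R)`: maximum size of a subset of `R` such that no
hyperedge contains two of its vertices. -/
noncomputable def indepNum [DecidableEq α] (H : FinHypergraph α) (R : Finset α) : ℕ :=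
  sSup {n : ℕ | ∃ I ⊆ R, (∀ e ∈ H.E, (I ∩ e).card ≤ 1) ∧ I.card = n}

/-- Maximum intersection size `η_H` of two distinct hyperedges. -/
noncomputable def eta [DecidableEq α] (H : FinHypergraph α) : ℕ :=
  sSup {n : ℕ | ∃ e₁ ∈ H.E, ∃ e₂ ∈ H.E, e₁ ≠ e₂ ∧ n = (e₁ ∩ e₂).card}

/-- The (bipartite) incidence graph of a hypergraph. -/
def incidence (H : FinHypergraph α) : SimpleGraph (α ⊕ Finset α) where
  Adj p q :=
    (∃ v e, p = Sum.inl v ∧ q = Sum.inr e ∧ e ∈ H.E ∧ v ∈ e) ∨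
    (∃ v e, p = Sum.inr e ∧ q = Sum.inl v ∧ e ∈ H.E ∧ v ∈ e)
  symm := by
    refine ⟨?_⟩
    rintro p q (⟨v, e, rfl, rfl, he, hv⟩ | ⟨v, e, rfl, rfl, he, hv⟩)
    · exact Or.inr ⟨v, e, rfl, rfl, he, hv⟩
    · exact Or.inl ⟨v, e, rfl, rfl, he, hv⟩
  loopless := by
    refine ⟨?_⟩
    rintro p (⟨v, e, rfl, h, -, -⟩ | ⟨v, e, rfl, h, -, -⟩) <;> exact absurd h (by simp)

/-- `μ_H`: degeneracy of the incidence graph of `H`. -/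
noncomputable def mu [DecidableEq α] (H : FinHypergraph α) : ℕ :=
  degeneracyOn H.incidence (H.V.image Sum.inl ∪ H.E.image Sum.inr)

/-- `γ(P) = ∑_{e ∈ E(H) : e ∩ P ≠ ∅} γ(e)`. -/
noncomputable def edgeWeight [DecidableEq α] (H : FinHypergraph α) (γ : Finset α → ℝ)
    (P : Finset α) : ℝ :=
  ∑ e ∈ H.E, if (e ∩ P).Nonempty then γ e else 0

/-- `u` can reach `v` by a walk of the primal graph avoiding `S`. -/
def ReachOutside (H : FinHypergraph α) (S : Finset α) (u v : α) : Prop :=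
  ∃ p : H.primal.Walk u v, ∀ w ∈ p.support, w ∉ S

/-- The connected component of `v` in the primal graph of `H` after deleting `S`. -/
noncomputable def comp (H : FinHypergraph α) (S : Finset α) (v : α) : Finset α := by
  classical exact H.V.filter (fun u => H.ReachOutside S v u)

/-- `S` is a `(γ,φ)`-balanced separator in `H`. -/
def IsGammaBalSep [DecidableEq α] (H : FinHypergraph α) (γ : Finset α → ℝ) (φ : ℝ)
    (S : Finset α) : Prop :=
  ∀ v ∈ H.V, v ∉ S → H.edgeWeight γ (H.comp S v) ≤ φ * H.edgeWeight γ H.V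

/-- `S` is a `(Z,φ)`-balanced separator in `H`. -/
def IsZBalSep [DecidableEq α] (H : FinHypergraph α) (Z : Finset α) (φ : ℝ)
    (S : Finset α) : Prop :=
  ∀ v ∈ H.V, v ∉ S →
    H.fracCoverSet (H.comp S v ∩ Z) ≤ φ * H.fracCoverSet Z

/-- `dist*_{H,x}(u,v)`: the minimum of `1` and the minimum total `x`-weight of a path
from `u` to `v` in the primal graph. -/
noncomputable def dist1 [DecidableEq α] (H : FinHypergraph α) (x : α → ℝ) (u v : α) : ℝ :=
  sInf ({1} ∪ {c : ℝ | ∃ p : H.primal.Walk u v, p.IsPath ∧ c = ∑ w ∈ p.support.toFinset, x w})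

/-- `dist*_{H,x}(e,e') = min_{u ∈ e, v ∈ e'} dist*_{H,x}(u,v)`. -/
noncomputable def distE [DecidableEq α] (H : FinHypergraph α) (x : α → ℝ)
    (e e' : Finset α) : ℝ :=
  sInf {c : ℝ | ∃ u ∈ e, ∃ v ∈ e', c = H.dist1 x u v}

/-- `x` is a fractional `(γ,φ)`-balanced separator in `H`. -/
def IsFracGammaBalSep [DecidableEq α] (H : FinHypergraph α) (γ : Finset α → ℝ) (φ : ℝ)
    (x : α → ℝ) : Prop :=
  ∀ e ∈ H.E, (1 - φ) * (∑ e' ∈ H.E, γ e') ≤ ∑ e' ∈ H.E, H.distE x e e' * γ e'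

/-- The induced subhypergraph `H[Q]` for `Q ⊆ V(H)`. -/
def induce [DecidableEq α] (H : FinHypergraph α) (Q : Finset α) (hQ : Q ⊆ H.V) :
    FinHypergraph α where
  V := Q
  E := (H.E.image (fun e => e ∩ Q)).filter (fun e => e.Nonempty)
  edge_sub := by
    intro e he
    simp only [mem_filter, mem_image] at he
    obtain ⟨⟨e', -, rfl⟩, -⟩ := he
    exact inter_subset_right
  edge_nonempty := by
    intro e he
    exact (mem_filter.mp he).2
  no_isolated := by
    intro v hv
    obtain ⟨e, he, hve⟩ := H.no_isolated v (hQ hv)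
    exact ⟨e ∩ Q, mem_filter.mpr ⟨mem_image.mpr ⟨e, he, rfl⟩,
      ⟨v, mem_inter.mpr ⟨hve, hv⟩⟩⟩, mem_inter.mpr ⟨hve, hv⟩⟩

/-- The ball `B^Q_c(r)` of radius `r` around `c` in `H[Q]` with respect to `x`. -/
noncomputable def ball [DecidableEq α] (H : FinHypergraph α) (x : α → ℝ) (Q : Finset α)
    (hQ : Q ⊆ H.V) (c : α) (r : ℝ) : Finset α := by
  classical exact Q.filter (fun v => (H.induce Q hQ).dist1 x c v ≤ r)

end FinHypergraph

/-- A tree decomposition of a hypergraph. -/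
structure TreeDecomp {α : Type*} (H : FinHypergraph α) where
  ι : Type
  fintype : Fintype ι
  T : SimpleGraph ι
  isTree : T.IsTree
  bag : ι → Finset α
  bag_sub : ∀ t, bag t ⊆ H.V
  bag_conn : ∀ v ∈ H.V, (SimpleGraph.induce {t | v ∈ bag t} T).Connected
  edge_bag : ∀ e ∈ H.E, ∃ t, e ⊆ bag t

/-!
The nodes whose bags contain a vertex `v` form a subtree of the decomposition tree. A finite
family of subtrees of a tree can be met by at most as many nodes as it has pairwise disjoint
members. Vertices with disjoint subtrees share no hyperedge, since every hyperedge lies in some bag;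
so the bags of at most `α_H(S)` nodes contain `S`, and their fractional edge covers, each of weight
at most `ω`, add up to one of `S`.
-/

namespace SimpleGraph

variable {V : Type*} {G : SimpleGraph V} {r u v c t : V} {s : Set V}

lemma Preconnected.exists_walk_support_subset (hs : (G.induce s).Preconnected) (hu : u ∈ s)
    (hv : v ∈ s) : ∃ q : G.Walk u v, ∀ x ∈ q.support, x ∈ s := by
  obtain ⟨q⟩ := hs ⟨u, hu⟩ ⟨v, hv⟩
  let f : G.induce s →g G := (Embedding.induce s).toHom
  refine ⟨q.map f, fun x hx => ?_⟩
  replace hx : x ∈ (q.map f).support := hx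
  rw [Walk.support_map, List.mem_map] at hx
  obtain ⟨⟨y, hy⟩, -, rfl⟩ := hx
  exact hy

namespace IsAcyclic

lemma eq_of_isPath (hG : G.IsAcyclic) {p q : G.Walk u v} (hp : p.IsPath) (hq : q.IsPath) :
    p = q :=
  congrArg Subtype.val ((hG.subsingleton_path u v).elim ⟨p, hp⟩ ⟨q, hq⟩)

lemma length_eq_dist_of_isPath (hG : G.IsAcyclic) {p : G.Walk u v} (hp : p.IsPath) :
    p.length = G.dist u v := by
  obtain ⟨q, hq, hlen⟩ := p.reachable.exists_path_of_dist
  rw [← hlen, hG.eq_of_isPath hp hq]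

lemma support_subset_support_of_isPath (hG : G.IsAcyclic) {p : G.Walk u v} (hp : p.IsPath)
    (q : G.Walk u v) : p.support ⊆ q.support := by
  classical
  rw [hG.eq_of_isPath hp q.bypass_isPath]
  exact q.support_bypass_subset_support

lemma dist_add_dist_of_mem_support (hG : G.IsAcyclic) {p : G.Walk u v} (hp : p.IsPath)
    (ht : t ∈ p.support) : G.dist u t + G.dist t v = G.dist u v := by
  classical
  rw [← hG.length_eq_dist_of_isPath (hp.takeUntil ht),
    ← hG.length_eq_dist_of_isPath (hp.dropUntil ht), ← hG.length_eq_dist_of_isPath hp,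
    ← Walk.length_append, Walk.take_spec]

lemma support_subset_of_isPath (hG : G.IsAcyclic) (hs : (G.induce s).Preconnected)
    (hu : u ∈ s) (hv : v ∈ s) {p : G.Walk u v} (hp : p.IsPath) : ∀ x ∈ p.support, x ∈ s := by
  obtain ⟨q, hq⟩ := hs.exists_walk_support_subset hu hv
  exact fun x hx => hq x (hG.support_subset_support_of_isPath hp q hx)

/-- Every path from `r` into a connected set `s` passes through the point of `s` closest to `r`;
`q` witnesses that the end of the path is connected to that point inside `s`. -/
lemma mem_support_of_forall_dist_le (hG : G.IsAcyclic) (ht : ∀ x ∈ s, G.dist r t ≤ G.dist r x)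
    (q : G.Walk c t) (hq : ∀ x ∈ q.support, x ∈ s) {p : G.Walk r c} (hp : p.IsPath) :
    t ∈ p.support := by
  classical
  induction q with
  | nil => exact p.end_mem_support
  | @cons c d t hcd q ih =>
    have hq' : ∀ x ∈ q.support, x ∈ s := fun x hx => hq x (List.mem_cons_of_mem _ hx)
    by_cases hd : d ∈ p.support
    · exact p.support_takeUntil_subset_support hd (ih ht hq' (hp.takeUntil hd))
    have hpd := hp.concat hd hcd
    have htd := ih ht hq' hpd
    rw [Walk.support_concat, List.mem_append, List.mem_singleton] at htd
    refine htd.resolve_right fun htd => ?_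
    subst htd
    have hdist := hG.length_eq_dist_of_isPath hpd
    rw [Walk.length_concat, hG.length_eq_dist_of_isPath hp] at hdist
    have := ht c (hq c (Walk.start_mem_support _))
    omega

end IsAcyclic

namespace IsTree

/-- For `c ∈ A ∩ B`, the path from `r` to `c` passes through `tB` and runs along the paths
`r → tA → c`; on the first one `tB` would be at most as deep as `tA`, the second one lies in `A`. -/
lemma mem_of_inter_nonempty {A B : Set V} {tA tB : V} (hG : G.IsTree)
    (hA : (G.induce A).Preconnected) (hB : (G.induce B).Preconnected) (htA : tA ∈ A)
    (htB : tB ∈ B) (hmin : ∀ x ∈ B, G.dist r tB ≤ G.dist r x)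
    (hle : G.dist r tA ≤ G.dist r tB) (hAB : (A ∩ B).Nonempty) : tB ∈ A := by
  obtain ⟨c, hcA, hcB⟩ := hAB
  obtain ⟨q, hq⟩ := hB.exists_walk_support_subset hcB htB
  obtain ⟨p, hp⟩ := (hG.existsUnique_path r c).exists
  obtain ⟨p₁, hp₁⟩ := (hG.existsUnique_path r tA).exists
  obtain ⟨p₂, hp₂⟩ := (hG.existsUnique_path tA c).exists
  have hgate := hG.isAcyclic.mem_support_of_forall_dist_le hmin q hq hp
  have hmem := hG.isAcyclic.support_subset_support_of_isPath hp (p₁.append p₂) hgate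
  rw [Walk.support_append, List.mem_append] at hmem
  rcases hmem with h₁ | h₂
  · have := hG.isAcyclic.dist_add_dist_of_mem_support hp₁ h₁
    have hzero : G.dist tB tA = 0 := by omega
    rwa [hG.connected.dist_eq_zero_iff.mp hzero]
  · exact hG.isAcyclic.support_subset_of_isPath hA htA hcA hp₂ _ (List.mem_of_mem_tail h₂)

/-- The member whose point closest to a root is deepest will do. -/
lemma exists_mem_of_inter_nonempty {β : Type*} (hG : G.IsTree) (C : β → Set V) {S : Finset β}
    (hS : S.Nonempty) (hC : ∀ v ∈ S, (G.induce (C v)).Connected) :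
    ∃ v ∈ S, ∃ t ∈ C v, ∀ u ∈ S, (C u ∩ C v).Nonempty → t ∈ C u := by
  obtain ⟨r⟩ := hG.connected.nonempty
  have : Nonempty V := ⟨r⟩
  have htop : ∀ v ∈ S, ∃ t ∈ C v, ∀ x ∈ C v, G.dist r t ≤ G.dist r x := by
    intro v hv
    have hne : (C v).Nonempty := Set.nonempty_coe_sort.mp (hC v hv).nonempty
    exact ⟨_, Function.argminOn_mem _ _ hne, fun x hx => Function.argminOn_le _ _ hx⟩
  choose! top hmem hmin using htop
  obtain ⟨v, hv, hmax⟩ := S.exists_max_image (fun v => G.dist r (top v)) hS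
  exact ⟨v, hv, top v, hmem v hv, fun u hu huv => hG.mem_of_inter_nonempty
    (hC u hu).preconnected (hC v hv).preconnected (hmem u hu) (hmem v hv) (hmin v hv)
    (hmax u hu) huv⟩

/-- Put the node `t` given by `exists_mem_of_inter_nonempty` into the hitting set, its member
into the disjoint subfamily, and recurse on the members avoiding `t`. -/
theorem exists_hitting_card_le_pairwiseDisjoint {β : Type*} (hG : G.IsTree) (C : β → Set V)
    (S : Finset β) (hC : ∀ v ∈ S, (G.induce (C v)).Connected) :
    ∃ (X : Finset V) (I : Finset β), I ⊆ S ∧ (I : Set β).PairwiseDisjoint C ∧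
      X.card ≤ I.card ∧ ∀ v ∈ S, ∃ t ∈ X, t ∈ C v := by
  classical
  induction S using Finset.strongInduction with
  | H S ih =>
  rcases S.eq_empty_or_nonempty with rfl | hS
  · exact ⟨∅, ∅, by simp⟩
  obtain ⟨v, hv, t, ht, hmeet⟩ := hG.exists_mem_of_inter_nonempty C hS hC
  have hS' : S.filter (t ∉ C ·) ⊂ S := filter_ssubset.2 ⟨v, hv, not_not.2 ht⟩
  obtain ⟨X, I, hIS, hdisj, hcard, hhit⟩ :=
    ih _ hS' fun u hu => hC u (mem_filter.1 hu).1
  have hvI : v ∉ I := fun h => (mem_filter.1 (hIS h)).2 ht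
  refine ⟨insert t X, insert v I, insert_subset hv (hIS.trans (filter_subset _ _)), ?_, ?_, ?_⟩
  · rw [coe_insert]
    refine hdisj.insert fun u hu _ => Set.disjoint_left.mpr fun x hxv hxu => ?_
    have huS := mem_filter.1 (hIS hu)
    exact huS.2 (hmeet u huS.1 ⟨x, hxu, hxv⟩)
  · rw [card_insert_of_notMem hvI]
    exact (card_insert_le _ _).trans (by omega)
  · intro u hu
    by_cases htu : t ∈ C u
    · exact ⟨t, mem_insert_self _ _, htu⟩
    obtain ⟨t', ht', htu'⟩ := hhit u (mem_filter.2 ⟨hu, htu⟩)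
    exact ⟨t', mem_insert_of_mem ht', htu'⟩

end IsTree

end SimpleGraph

namespace FinHypergraph

variable {α : Type*} [DecidableEq α] (H : FinHypergraph α) {A B S S' : Finset α}
  {y z : Finset α → ℝ}

def IsFracEdgeCover (S : Finset α) (y : Finset α → ℝ) : Prop :=
  (∀ e, 0 ≤ y e ∧ y e ≤ 1) ∧ ∀ v ∈ H.V, v ∈ S → 1 ≤ ∑ e ∈ H.E, if v ∈ e then y e else 0

def IsIndepSet (I : Finset α) : Prop :=
  ∀ e ∈ H.E, (I ∩ e).card ≤ 1

variable {H}

lemma isFracEdgeCover_one (S : Finset α) : H.IsFracEdgeCover S 1 := by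
  refine ⟨fun _ => ⟨zero_le_one, le_rfl⟩, fun v hv _ => ?_⟩
  obtain ⟨e, he, hve⟩ := H.no_isolated v hv
  calc (1 : ℝ) = if v ∈ e then 1 else 0 := by rw [if_pos hve]
    _ ≤ ∑ e ∈ H.E, if v ∈ e then 1 else 0 :=
      single_le_sum (f := fun e => if v ∈ e then (1 : ℝ) else 0)
        (fun e _ => by split_ifs <;> norm_num) he

lemma IsFracEdgeCover.mono (hy : H.IsFracEdgeCover S' y) (h : S ⊆ S') : H.IsFracEdgeCover S y :=
  ⟨hy.1, fun v hv hvS => hy.2 v hv (h hvS)⟩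

lemma IsFracEdgeCover.union (hy : H.IsFracEdgeCover A y) (hz : H.IsFracEdgeCover B z) :
    H.IsFracEdgeCover (A ∪ B) fun e => min 1 (y e + z e) := by
  refine ⟨fun e => ⟨le_min zero_le_one (add_nonneg (hy.1 e).1 (hz.1 e).1), min_le_left _ _⟩,
    fun v hv hvAB => ?_⟩
  have hy_le : ∀ e, y e ≤ min 1 (y e + z e) := fun e =>
    le_min (hy.1 e).2 (le_add_of_nonneg_right (hz.1 e).1)
  have hz_le : ∀ e, z e ≤ min 1 (y e + z e) := fun e =>
    le_min (hz.1 e).2 (le_add_of_nonneg_left (hy.1 e).1)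
  rcases mem_union.mp hvAB with hvA | hvB
  · exact (hy.2 v hv hvA).trans (sum_le_sum fun e _ => by split_ifs <;> simp [hy_le])
  · exact (hz.2 v hv hvB).trans (sum_le_sum fun e _ => by split_ifs <;> simp [hz_le])

lemma isFracEdgeCover_iff : H.IsFracEdgeCover S y ↔ (∀ e, 0 ≤ y e ∧ y e ≤ 1) ∧
    ∀ v ∈ H.V, (if v ∈ S then (1 : ℝ) else 0) ≤ ∑ e ∈ H.E, if v ∈ e then y e else 0 := by
  refine ⟨fun hy => ⟨hy.1, fun v hv => ?_⟩, fun hy => ⟨hy.1, fun v hv hvS => ?_⟩⟩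
  · split_ifs with hvS
    · exact hy.2 v hv hvS
    · exact sum_nonneg fun e _ => by split_ifs <;> simp [(hy.1 e).1]
  · simpa [hvS] using hy.2 v hv

lemma fracCoverSet_le_sum (hy : H.IsFracEdgeCover S y) : H.fracCoverSet S ≤ ∑ e ∈ H.E, y e := by
  obtain ⟨hbound, hcover⟩ := isFracEdgeCover_iff.mp hy
  refine csInf_le ⟨0, ?_⟩ ⟨y, hbound, hcover, rfl⟩
  rintro _ ⟨z, hz, -, rfl⟩
  exact sum_nonneg fun e _ => (hz e).1

lemma le_fracCoverSet {c : ℝ} (h : ∀ y, H.IsFracEdgeCover S y → c ≤ ∑ e ∈ H.E, y e) :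
    c ≤ H.fracCoverSet S := by
  obtain ⟨hbound, hcover⟩ := isFracEdgeCover_iff.mp (isFracEdgeCover_one (H := H) S)
  refine le_csInf ⟨_, 1, hbound, hcover, rfl⟩ ?_
  rintro _ ⟨y, hy, hcov, rfl⟩
  exact h y (isFracEdgeCover_iff.mpr ⟨hy, hcov⟩)

lemma fracCoverSet_nonneg (S : Finset α) : 0 ≤ H.fracCoverSet S :=
  Real.sInf_nonneg fun _ ⟨_, hy, _, hc⟩ => hc ▸ sum_nonneg fun e _ => (hy e).1

lemma fracCoverSet_mono (h : S ⊆ S') : H.fracCoverSet S ≤ H.fracCoverSet S' :=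
  le_fracCoverSet fun _ hy => fracCoverSet_le_sum (hy.mono h)

lemma fracCoverSet_union_le (A B : Finset α) :
    H.fracCoverSet (A ∪ B) ≤ H.fracCoverSet A + H.fracCoverSet B := by
  have hsum : ∀ y z, H.IsFracEdgeCover A y → H.IsFracEdgeCover B z →
      H.fracCoverSet (A ∪ B) ≤ ∑ e ∈ H.E, y e + ∑ e ∈ H.E, z e := by
    intro y z hy hz
    calc H.fracCoverSet (A ∪ B) ≤ ∑ e ∈ H.E, min 1 (y e + z e) :=
          fracCoverSet_le_sum (hy.union hz)
      _ ≤ ∑ e ∈ H.E, (y e + z e) := sum_le_sum fun e _ => min_le_right _ _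
      _ = ∑ e ∈ H.E, y e + ∑ e ∈ H.E, z e := sum_add_distrib
  have : H.fracCoverSet (A ∪ B) - H.fracCoverSet B ≤ H.fracCoverSet A :=
    le_fracCoverSet fun y hy => by
      have : H.fracCoverSet (A ∪ B) - ∑ e ∈ H.E, y e ≤ H.fracCoverSet B :=
        le_fracCoverSet fun z hz => by linarith [hsum y z hy hz]
      linarith
  linarith

lemma fracCoverSet_biUnion_le {ι : Type*} (X : Finset ι) (f : ι → Finset α) :
    H.fracCoverSet (X.biUnion f) ≤ ∑ t ∈ X, H.fracCoverSet (f t) := by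
  classical
  induction X using Finset.induction_on with
  | empty => simpa using fracCoverSet_le_sum (H := H) (S := ∅) (y := 0) ⟨by simp, by simp⟩
  | insert t X ht ih =>
    rw [biUnion_insert, sum_insert ht]
    exact (H.fracCoverSet_union_le _ _).trans (by linarith)

lemma IsIndepSet.card_le_indepNum {I R : Finset α} (hI : H.IsIndepSet I) (hIR : I ⊆ R) :
    I.card ≤ H.indepNum R :=
  le_csSup ⟨R.card, fun _ ⟨_, hJ, _, hn⟩ => hn ▸ card_le_card hJ⟩ ⟨I, hIR, hI, rfl⟩

end FinHypergraph

namespace TreeDecomp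

variable {α : Type*} [DecidableEq α] {H : FinHypergraph α}

lemma isIndepSet_of_pairwiseDisjoint (D : TreeDecomp H) {I : Finset α}
    (hI : (I : Set α).PairwiseDisjoint fun v => {t | v ∈ D.bag t}) : H.IsIndepSet I := by
  intro e he
  obtain ⟨t, ht⟩ := D.edge_bag e he
  refine card_le_one.mpr fun a ha b hb => by_contra fun hab => ?_
  rw [mem_inter] at ha hb
  exact Set.disjoint_left.mp (hI ha.1 hb.1 hab) (ht ha.2 : a ∈ D.bag t) (ht hb.2)

end TreeDecomp

/-- If `H` admits a tree decomposition of fractional hypertree width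
at most `ω`, then `ρ*_H(S) ≤ α_H(S)·ω` for every `S ⊆ V(H)`. -/
theorem fracCover_le_indepNum_mul_width {α : Type*} [DecidableEq α] (H : FinHypergraph α)
    (D : TreeDecomp H) (ω : ℝ) (hω : ∀ t, H.fracCoverSet (D.bag t) ≤ ω)
    (S : Finset α) (hS : S ⊆ H.V) :
    H.fracCoverSet S ≤ (H.indepNum S : ℝ) * ω := by
  obtain ⟨X, I, hIS, hdisj, hXI, hhit⟩ := D.isTree.exists_hitting_card_le_pairwiseDisjoint
    (fun v => {t | v ∈ D.bag t}) S fun v hv => D.bag_conn v (hS hv)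
  have hSX : S ⊆ X.biUnion D.bag := fun v hv => by
    obtain ⟨t, htX, hvt⟩ := hhit v hv
    exact mem_biUnion.mpr ⟨t, htX, hvt⟩
  have hIα : I.card ≤ H.indepNum S :=
    (D.isIndepSet_of_pairwiseDisjoint hdisj).card_le_indepNum hIS
  obtain ⟨t₀⟩ := D.isTree.connected.nonempty
  have hω₀ : 0 ≤ ω := (H.fracCoverSet_nonneg _).trans (hω t₀)
  calc H.fracCoverSet S ≤ H.fracCoverSet (X.biUnion D.bag) := H.fracCoverSet_mono hSX
    _ ≤ ∑ t ∈ X, H.fracCoverSet (D.bag t) := H.fracCoverSet_biUnion_le X D.bag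
    _ ≤ X.card * ω := by simpa using sum_le_sum fun t _ => hω t
    _ ≤ H.indepNum S * ω := by gcongr; exact_mod_cast hXI.trans hIα
end
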